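/- For every c > 0, α > 0, d ∈ L²([0,T]) and w ∈ L²(ℝ), the reduced WRI objective is a scalar multiple of the FWI objective: inf over g ∈ L²([z_min,z_max]×ℝ) of (1/2)·(‖d − S_p[c]w − S[c]g‖²_{L²([0,T])} + α²·‖g‖²) equals u(c)·(1/2)·‖d − S_p[c]w‖²_{L²([0,T])}, where u(c) = α²·((z_max − z_min)/(4c²) + α²)⁻¹ = 4c²α²/((z_max − z_min) + 4c²α²). (Equations 27–28 of the paper.) -/

import Mathlib

/-!
Write `r = d - S_p[c] w` and `L = zmax - zmin`. Cauchy–Schwarz in `z`, together with translation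
invariance in `t` on each slice of the sheared product `(z, t) ↦ (z, t - |zr - z| / c)`, gives
`‖S[c] g‖² ≤ ε ‖g‖²` with `ε = L / (4c²)`. Integrating the scalar inequality
`a / (ε + a) r² ≤ (r - s)² + (a / ε) s²` with `a = α²`, `s = S[c] g` bounds the WRI objective
below by `u(c) · ½‖r‖²`, since `u(c) = a / (ε + a)`. The bound is attained by
`g(z, t) = β r(t + |zr - z| / c)` (a multiple of `S[c]* r`), for which `S[c] g = β L / (2c) · r`.
-/

open MeasureTheory Set

section CauchySchwarz

variable {α β : Type*} [MeasurableSpace α] [MeasurableSpace β]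

theorem sq_integral_le_measureReal_univ_mul {μ : Measure α} [IsFiniteMeasure μ] {F : α → ℝ}
    (hF : MemLp F 2 μ) :
    (∫ x, F x ∂μ) ^ 2 ≤ μ.real univ * ∫ x, F x ^ 2 ∂μ := by
  set ℓ := μ.real univ
  set I := ∫ x, F x ∂μ
  have hF1 : Integrable F μ := hF.integrable one_le_two
  have hF2 : Integrable (fun x => F x ^ 2) μ := hF.integrable_sq
  have expand : ∫ x, (ℓ * F x - I) ^ 2 ∂μ = ℓ * (ℓ * ∫ x, F x ^ 2 ∂μ - I ^ 2) := by
    have hsq : (fun x => (ℓ * F x - I) ^ 2)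
        = fun x => ℓ ^ 2 * F x ^ 2 - 2 * ℓ * I * F x + I ^ 2 := by
      funext x; ring
    have hlin : Integrable (fun x => ℓ ^ 2 * F x ^ 2 - 2 * ℓ * I * F x) μ :=
      (hF2.const_mul _).sub (hF1.const_mul _)
    rw [hsq, integral_add hlin (integrable_const _),
      integral_sub (hF2.const_mul _) (hF1.const_mul _), integral_const_mul, integral_const_mul,
      integral_const, smul_eq_mul]
    ring
  have key : 0 ≤ ℓ * (ℓ * ∫ x, F x ^ 2 ∂μ - I ^ 2) :=
    expand ▸ integral_nonneg fun x => sq_nonneg _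
  rcases (measureReal_nonneg (μ := μ) (s := univ)).eq_or_lt with hℓ | hℓ
  · have hμ : μ = 0 := by
      rw [← Measure.measure_univ_eq_zero, ← measureReal_eq_zero_iff]
      exact hℓ.symm
    simp [I, hμ]
  · nlinarith [nonneg_of_mul_nonneg_right key hℓ]

variable {ν : Measure α} {μ : Measure β} [SFinite ν] [IsFiniteMeasure μ] {F : α × β → ℝ}

theorem ae_sq_integral_prod_right_le (hF : MemLp F 2 (ν.prod μ)) :
    ∀ᵐ x ∂ν, (∫ y, F (x, y) ∂μ) ^ 2 ≤ μ.real univ * ∫ y, F (x, y) ^ 2 ∂μ := by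
  filter_upwards [hF.integrable_sq.prod_right_ae, hF.aestronglyMeasurable.prodMk_left]
    with x hx hxm
  exact sq_integral_le_measureReal_univ_mul ((memLp_two_iff_integrable_sq hxm).2 hx)

theorem memLp_two_integral_prod_right (hF : MemLp F 2 (ν.prod μ)) :
    MemLp (fun x => ∫ y, F (x, y) ∂μ) 2 ν := by
  have hm := hF.aestronglyMeasurable.integral_prod_right'
  refine (memLp_two_iff_integrable_sq hm).2 <|
    (hF.integrable_sq.integral_prod_left.const_mul (μ.real univ)).mono' (hm.pow 2) ?_
  filter_upwards [ae_sq_integral_prod_right_le hF] with x hx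
  rwa [Real.norm_eq_abs, abs_of_nonneg (sq_nonneg _)]

theorem integral_sq_integral_prod_right_le (hF : MemLp F 2 (ν.prod μ)) :
    ∫ x, (∫ y, F (x, y) ∂μ) ^ 2 ∂ν ≤ μ.real univ * ∫ p, F p ^ 2 ∂(ν.prod μ) := by
  rw [integral_prod _ hF.integrable_sq, ← integral_const_mul]
  exact integral_mono_of_nonneg (ae_of_all _ fun _ => sq_nonneg _)
    (hF.integrable_sq.integral_prod_left.const_mul _) (ae_sq_integral_prod_right_le hF)

end CauchySchwarz

section Shear

variable {β G : Type*} [MeasurableSpace β] [MeasurableSpace G] [AddGroup G] [MeasurableAdd₂ G]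

theorem measurePreserving_shear (μ : Measure β) (ν : Measure G) [SFinite μ] [SFinite ν]
    [ν.IsAddRightInvariant] {φ : β → G} (hφ : Measurable φ) :
    MeasurePreserving (fun p : β × G => (p.1, p.2 + φ p.1)) (μ.prod ν) (μ.prod ν) :=
  (MeasurePreserving.id μ).skew_product (measurable_snd.add (hφ.comp measurable_fst))
    (ae_of_all _ fun a => map_add_right_eq_self ν (φ a))

theorem MeasureTheory.MemLp.comp_shear {E : Type*} [NormedAddCommGroup E] {p : ENNReal}
    {μ : Measure β} {ν : Measure G} [SFinite μ] [SFinite ν] [ν.IsAddRightInvariant] {φ : β → G}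
    (hφ : Measurable φ) {F : β × G → E} (hF : MemLp F p (μ.prod ν)) :
    MemLp (fun q : β × G => F (q.1, q.2 + φ q.1)) p (μ.prod ν) :=
  hF.comp_measurePreserving (measurePreserving_shear μ ν hφ)

variable {μ : Measure β} [IsFiniteMeasure μ] {φ : β → ℝ} {g : β → ℝ → ℝ}

theorem memLp_two_sub_shear (hφ : Measurable φ)
    (hg : MemLp (fun p : β × ℝ => g p.1 p.2) 2 (μ.prod volume)) :
    MemLp (fun p : β × ℝ => g p.1 (p.2 - φ p.1)) 2 (μ.prod volume) := by
  simpa [sub_eq_add_neg] using hg.comp_shear hφ.neg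

theorem memLp_two_integral_shear (hφ : Measurable φ)
    (hg : MemLp (fun p : β × ℝ => g p.1 p.2) 2 (μ.prod volume)) :
    MemLp (fun t => ∫ z, g z (t - φ z) ∂μ) 2 volume :=
  memLp_two_integral_prod_right <|
    (memLp_two_sub_shear hφ hg).comp_measurePreserving Measure.measurePreserving_swap

theorem integral_sq_integral_shear_le (hφ : Measurable φ)
    (hg : MemLp (fun p : β × ℝ => g p.1 p.2) 2 (μ.prod volume)) :
    ∫ t, (∫ z, g z (t - φ z) ∂μ) ^ 2 ≤ μ.real univ * ∫ z, (∫ t, g z t ^ 2) ∂μ := by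
  have hG := memLp_two_sub_shear hφ hg
  calc ∫ t, (∫ z, g z (t - φ z) ∂μ) ^ 2
      ≤ μ.real univ * ∫ q, g q.2 (q.1 - φ q.2) ^ 2 ∂(volume.prod μ) :=
        integral_sq_integral_prod_right_le
          (hG.comp_measurePreserving Measure.measurePreserving_swap)
    _ = μ.real univ * ∫ p, g p.1 (p.2 - φ p.1) ^ 2 ∂(μ.prod volume) := by
        congr 1; exact integral_prod_swap (fun p : β × ℝ => g p.1 (p.2 - φ p.1) ^ 2)
    _ = μ.real univ * ∫ z, (∫ t, g z t ^ 2) ∂μ := by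
        rw [integral_prod _ hG.integrable_sq]
        congr 2 with z
        exact integral_sub_right_eq_self (fun t => g z t ^ 2) (φ z)

end Shear

theorem div_add_mul_sq_le {a ε : ℝ} (ha : 0 ≤ a) (hε : 0 < ε) (r s : ℝ) :
    a / (ε + a) * r ^ 2 ≤ (r - s) ^ 2 + a / ε * s ^ 2 := by
  have hεa : 0 < ε + a := by linarith
  have key : ε * (ε + a) * ((r - s) ^ 2 + a / ε * s ^ 2 - a / (ε + a) * r ^ 2)
      = (ε * r - (ε + a) * s) ^ 2 := by
    field_simp
    ring
  have := nonneg_of_mul_nonneg_right (key ▸ sq_nonneg _) (mul_pos hε hεa)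
  linarith

theorem div_add_mul_integral_sq_le {α : Type*} [MeasurableSpace α] {ν : Measure α}
    {r s : α → ℝ} (hr : MemLp r 2 ν) (hs : MemLp s 2 ν) {a ε G : ℝ} (ha : 0 ≤ a) (hε : 0 < ε)
    (hsG : ∫ x, s x ^ 2 ∂ν ≤ ε * G) :
    a / (ε + a) * ∫ x, r x ^ 2 ∂ν ≤ ∫ x, (r x - s x) ^ 2 ∂ν + a * G := by
  have hrs : Integrable (fun x => (r x - s x) ^ 2) ν := (hr.sub hs).integrable_sq
  have hs2 : Integrable (fun x => a / ε * s x ^ 2) ν := hs.integrable_sq.const_mul _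
  calc a / (ε + a) * ∫ x, r x ^ 2 ∂ν
      = ∫ x, a / (ε + a) * r x ^ 2 ∂ν := (integral_const_mul _ _).symm
    _ ≤ ∫ x, ((r x - s x) ^ 2 + a / ε * s x ^ 2) ∂ν :=
        integral_mono (hr.integrable_sq.const_mul _) (hrs.add hs2)
          fun x => div_add_mul_sq_le ha hε (r x) (s x)
    _ = ∫ x, (r x - s x) ^ 2 ∂ν + a / ε * ∫ x, s x ^ 2 ∂ν := by
        rw [integral_add hrs hs2, integral_const_mul]
    _ ≤ ∫ x, (r x - s x) ^ 2 ∂ν + a / ε * (ε * G) := by gcongr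
    _ = ∫ x, (r x - s x) ^ 2 ∂ν + a * G := by field_simp

noncomputable def extendedModeling (zr zmin zmax c : ℝ) (g : ℝ → ℝ → ℝ) (t : ℝ) : ℝ :=
  1 / (2 * c) * ∫ z in zmin..zmax, g z (t - |zr - z| / c)

section ExtendedModeling

variable {zr zmin zmax c : ℝ}

theorem intervalIntegral_eq_integral_Icc {E : Type*} [NormedAddCommGroup E] [NormedSpace ℝ E]
    {a b : ℝ} (hab : a ≤ b) (f : ℝ → E) :
    ∫ x in a..b, f x = ∫ x in Icc a b, f x := by
  rw [intervalIntegral.integral_of_le hab, integral_Icc_eq_integral_Ioc]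

variable {g : ℝ → ℝ → ℝ}

theorem memLp_extendedModeling (hz : zmin ≤ zmax)
    (hg : MemLp (fun p : ℝ × ℝ => g p.1 p.2) 2 ((volume.restrict (Icc zmin zmax)).prod volume)) :
    MemLp (extendedModeling zr zmin zmax c g) 2 volume := by
  unfold extendedModeling
  simp_rw [intervalIntegral_eq_integral_Icc hz]
  exact (memLp_two_integral_shear (by fun_prop) hg).const_mul _

theorem integral_sq_extendedModeling_le (hz : zmin ≤ zmax)
    (hg : MemLp (fun p : ℝ × ℝ => g p.1 p.2) 2 ((volume.restrict (Icc zmin zmax)).prod volume)) :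
    ∫ t, extendedModeling zr zmin zmax c g t ^ 2
      ≤ (zmax - zmin) / (4 * c ^ 2) * ∫ z in zmin..zmax, ∫ t, g z t ^ 2 := by
  have hL : (volume.restrict (Icc zmin zmax)).real univ = zmax - zmin := by
    simp [hz]
  have hCS := integral_sq_integral_shear_le (φ := fun z => |zr - z| / c) (by fun_prop) hg
  rw [hL] at hCS
  unfold extendedModeling
  simp_rw [intervalIntegral_eq_integral_Icc hz, mul_pow, integral_const_mul]
  calc (1 / (2 * c)) ^ 2 * ∫ t, (∫ z in Icc zmin zmax, g z (t - |zr - z| / c)) ^ 2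
      ≤ (1 / (2 * c)) ^ 2 * ((zmax - zmin) * ∫ z in Icc zmin zmax, ∫ t, g z t ^ 2) :=
        mul_le_mul_of_nonneg_left hCS (sq_nonneg _)
    _ = _ := by ring

theorem extendedModeling_shift (f : ℝ → ℝ) (t : ℝ) :
    extendedModeling zr zmin zmax c (fun z s => f (s + |zr - z| / c)) t
      = (zmax - zmin) / (2 * c) * f t := by
  simp only [extendedModeling, sub_add_cancel, intervalIntegral.integral_const, smul_eq_mul]
  ring

theorem integral_integral_sq_shift (f : ℝ → ℝ) :
    ∫ z in zmin..zmax, ∫ t, f (t + |zr - z| / c) ^ 2 = (zmax - zmin) * ∫ t, f t ^ 2 := by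
  have hshift (z : ℝ) : ∫ t, f (t + |zr - z| / c) ^ 2 = ∫ t, f t ^ 2 :=
    integral_add_right_eq_self (fun t => f t ^ 2) _
  simp only [hshift, intervalIntegral.integral_const, smul_eq_mul]

end ExtendedModeling

section Objective

variable {zr zmin zmax T c : ℝ} (α : ℝ) {r : ℝ → ℝ}

theorem scaled_fwi_le_wri_objective (hz : zmin < zmax) (hT : 0 ≤ T) (hc : c ≠ 0)
    (hr : MemLp r 2 (volume.restrict (Ioc 0 T))) {g : ℝ → ℝ → ℝ}
    (hg : MemLp (fun p : ℝ × ℝ => g p.1 p.2) 2 ((volume.restrict (Icc zmin zmax)).prod volume)) :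
    4 * c ^ 2 * α ^ 2 / ((zmax - zmin) + 4 * c ^ 2 * α ^ 2) * (1 / 2 * ∫ t in (0 : ℝ)..T, r t ^ 2)
      ≤ 1 / 2 * ((∫ t in (0 : ℝ)..T, (r t - extendedModeling zr zmin zmax c g t) ^ 2)
        + α ^ 2 * ∫ z in zmin..zmax, ∫ t, g z t ^ 2) := by
  have hS : MemLp (extendedModeling zr zmin zmax c g) 2 volume := memLp_extendedModeling hz.le hg
  have hSν : ∫ t in Ioc 0 T, extendedModeling zr zmin zmax c g t ^ 2
      ≤ (zmax - zmin) / (4 * c ^ 2) * ∫ z in zmin..zmax, ∫ t, g z t ^ 2 :=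
    (setIntegral_le_integral hS.integrable_sq (ae_of_all _ fun _ => sq_nonneg _)).trans
      (integral_sq_extendedModeling_le hz.le hg)
  have hu : 4 * c ^ 2 * α ^ 2 / ((zmax - zmin) + 4 * c ^ 2 * α ^ 2)
      = α ^ 2 / ((zmax - zmin) / (4 * c ^ 2) + α ^ 2) := by
    field_simp
  have hTik := div_add_mul_integral_sq_le hr (hS.restrict _) (sq_nonneg α)
    (by have := sub_pos.2 hz; positivity) hSν
  rw [intervalIntegral.integral_of_le hT, intervalIntegral.integral_of_le hT, hu]
  linarith

theorem exists_wri_minimizer (hz : zmin < zmax) (hT : 0 ≤ T) (hc : c ≠ 0)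
    (hr : MemLp r 2 (volume.restrict (Ioc 0 T))) :
    ∃ g : ℝ → ℝ → ℝ,
      MemLp (fun p : ℝ × ℝ => g p.1 p.2) 2 ((volume.restrict (Icc zmin zmax)).prod volume) ∧
      4 * c ^ 2 * α ^ 2 / ((zmax - zmin) + 4 * c ^ 2 * α ^ 2) * (1 / 2 * ∫ t in (0 : ℝ)..T, r t ^ 2)
        = 1 / 2 * ((∫ t in (0 : ℝ)..T, (r t - extendedModeling zr zmin zmax c g t) ^ 2)
          + α ^ 2 * ∫ z in zmin..zmax, ∫ t, g z t ^ 2) := by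
  set L := zmax - zmin
  have hL0 : 0 < L := sub_pos.2 hz
  set k := L / (2 * c)
  -- `β` minimises `(1 - k β) ^ 2 + α ^ 2 L β ^ 2`, the objective along this family in units
  -- of `½‖r‖²`
  set β := k / (k ^ 2 + α ^ 2 * L)
  set f := (Ioc 0 T).indicator (fun t => β * r t)
  have hf : MemLp f 2 volume := (memLp_indicator_iff_restrict measurableSet_Ioc).2 (hr.const_mul β)
  refine ⟨fun z t => f (t + |zr - z| / c),
    (hf.comp_snd _).comp_shear (φ := fun z => |zr - z| / c) (by fun_prop), ?_⟩
  have hres : ∫ t in (0 : ℝ)..T, (r t - extendedModeling zr zmin zmax c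
      (fun z t => f (t + |zr - z| / c)) t) ^ 2 = (1 - k * β) ^ 2 * ∫ t in (0 : ℝ)..T, r t ^ 2 := by
    rw [intervalIntegral.integral_of_le hT, intervalIntegral.integral_of_le hT,
      ← integral_const_mul]
    refine setIntegral_congr_fun measurableSet_Ioc fun t ht => ?_
    rw [extendedModeling_shift, show f t = β * r t from indicator_of_mem ht _]
    ring
  have hreg : ∫ z in zmin..zmax, ∫ t, f (t + |zr - z| / c) ^ 2
      = L * (β ^ 2 * ∫ t in (0 : ℝ)..T, r t ^ 2) := by
    have hf2 : (fun t => f t ^ 2) = (Ioc 0 T).indicator (fun t => β ^ 2 * r t ^ 2) := by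
      funext t
      by_cases ht : t ∈ Ioc 0 T <;> simp [f, ht, mul_pow]
    rw [integral_integral_sq_shift, hf2, integral_indicator measurableSet_Ioc,
      integral_const_mul, intervalIntegral.integral_of_le hT]
  rw [hres, hreg]
  have hkβ : (1 - k * β) ^ 2 + α ^ 2 * (L * β ^ 2)
      = 4 * c ^ 2 * α ^ 2 / (L + 4 * c ^ 2 * α ^ 2) := by
    have hden : 0 < k ^ 2 + α ^ 2 * L := by positivity
    simp only [β, k]
    field_simp
    ring
  rw [← hkβ]
  ring

end Objective

theorem wri_is_scaled_fwi_general
    (zs zr zmin zmax T c α : ℝ)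
    (hz : zmin < zmax) (hT : 0 < T) (hc : 0 < c)
    (d w : ℝ → ℝ)
    (hd : MemLp d 2 (volume.restrict (Icc 0 T))) (hw : MemLp w 2) :
    sInf { v : ℝ | ∃ g : ℝ → ℝ → ℝ,
        MemLp (fun p : ℝ × ℝ => g p.1 p.2) 2
          ((volume.restrict (Icc zmin zmax)).prod volume) ∧
        v = (1/2) * ((∫ t in (0:ℝ)..T,
              (d t - (1/(2*c)) * w (t - |zs - zr| / c)
                - (1/(2*c)) * ∫ z in zmin..zmax, g z (t - |zr - z| / c)) ^ 2)
            + α^2 * ∫ z in zmin..zmax, ∫ t : ℝ, (g z t) ^ 2) }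
      = (4*c^2*α^2 / ((zmax - zmin) + 4*c^2*α^2)) *
          ((1/2) * ∫ t in (0:ℝ)..T, (d t - (1/(2*c)) * w (t - |zs - zr| / c)) ^ 2) := by
  have hr : MemLp (fun t => d t - (1/(2*c)) * w (t - |zs - zr| / c)) 2
      (volume.restrict (Ioc 0 T)) :=
    (hd.mono_measure (Measure.restrict_mono Ioc_subset_Icc_self le_rfl)).sub
      (((hw.comp_measurePreserving (measurePreserving_sub_right volume _)).restrict _).const_mul _)
  refine IsLeast.csInf_eq ⟨exists_wri_minimizer α hz hT.le hc.ne' hr, ?_⟩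
  rintro v ⟨g, hg, rfl⟩
  exact scaled_fwi_le_wri_objective α hz hT.le hc.ne' hr hg

/-- Equations 27–28 of the paper: the reduced WRI objective is the FWI objective
scaled by `u(c) = 4c²α²/((zmax - zmin) + 4c²α²)`. -/
theorem wri_is_scaled_fwi
    (zs zr zmin zmax T c α : ℝ)
    (hzr : zs ≠ zr) (hz : zmin < zmax) (hT : 0 < T) (hc : 0 < c) (hα : 0 < α)
    (d w : ℝ → ℝ)
    (hd : MemLp d 2 (volume.restrict (Icc 0 T))) (hw : MemLp w 2) :
    sInf { v : ℝ | ∃ g : ℝ → ℝ → ℝ,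
        MemLp (fun p : ℝ × ℝ => g p.1 p.2) 2
          ((volume.restrict (Icc zmin zmax)).prod volume) ∧
        v = (1/2) * ((∫ t in (0:ℝ)..T,
              (d t - (1/(2*c)) * w (t - |zs - zr| / c)
                - (1/(2*c)) * ∫ z in zmin..zmax, g z (t - |zr - z| / c)) ^ 2)
            + α^2 * ∫ z in zmin..zmax, ∫ t : ℝ, (g z t) ^ 2) }
      = (4*c^2*α^2 / ((zmax - zmin) + 4*c^2*α^2)) *
          ((1/2) * ∫ t in (0:ℝ)..T, (d t - (1/(2*c)) * w (t - |zs - zr| / c)) ^ 2) :=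
  wri_is_scaled_fwi_general zs zr zmin zmax T c α hz hT hc d w hd hw
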